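/- Let α ∈ (0,1/2], let 𝒯 be an α-tree on a measure space (X,μ) with 0 < μ(X) < ∞, let φ ∈ L¹(X,μ), and let I ∈ 𝒯. Set L = sup{⟨φ⟩_{R,μ} : R ∈ 𝒯, R ⊇ I}. Then L = ess inf_I N_𝒯φ. -/

import Mathlib

open MeasureTheory Set Filter Topology

noncomputable section

/-- The average `⟨f⟩_{J,μ}` of `f` over `J` with respect to `μ`. -/
def avgOn {X : Type*} [MeasurableSpace X] (μ : Measure X) (J : Set X) (f : X → ℝ) : ℝ :=
  ⨍ x in J, f x ∂μ

/-- An `α`-tree on the measure space `(X, μ)`: `gen m` is the `m`-th generation `𝒯_m`,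
`children J` is the family `C(J)` of children of `J`. -/
structure AlphaTree {X : Type*} [MeasurableSpace X] (μ : Measure X) (α : ℝ) where
  gen : ℕ → Set (Set X)
  children : Set X → Set (Set X)
  gen_zero : gen 0 = {Set.univ}
  gen_succ : ∀ m, gen (m + 1) = ⋃ J ∈ gen m, children J
  measurableSet : ∀ m, ∀ J ∈ gen m, MeasurableSet J
  sUnion_children : ∀ m, ∀ J ∈ gen m, ⋃₀ children J = J
  ae_disjoint : ∀ m, ∀ J ∈ gen m,
    (children J).Pairwise fun I I' => μ (I ∩ I') = 0
  measure_child : ∀ m, ∀ J ∈ gen m, ∀ I ∈ children J,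
    ENNReal.ofReal α * μ J ≤ μ I
  differentiates : ∀ f : X → ℝ, Integrable f μ →
    ∀ᵐ x ∂μ, ∀ J : ℕ → Set X, (∀ k, J k ∈ gen k ∧ x ∈ J k) →
      Tendsto (fun k => avgOn μ (J k) f) atTop (𝓝 (f x))

namespace AlphaTree

variable {X : Type*} [MeasurableSpace X] {μ : Measure X} {α : ℝ}

/-- `J ∈ 𝒯`. -/
def Mem (T : AlphaTree μ α) (J : Set X) : Prop := ∃ m, J ∈ T.gen m

/-- The set of quantities `(⟨φ²⟩_J − ⟨φ⟩_J²)^{1/2}`, `J ∈ 𝒯`, whose supremum is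
the BMO(𝒯) norm. -/
def bmoSet (T : AlphaTree μ α) (φ : X → ℝ) : Set ℝ :=
  {r | ∃ J, T.Mem J ∧
    r = Real.sqrt (avgOn μ J (fun x => (φ x) ^ 2) - (avgOn μ J φ) ^ 2)}

/-- Same as `bmoSet`, but over tree elements contained in `K` (i.e. over `𝒯(K)`). -/
def bmoSetOn (T : AlphaTree μ α) (K : Set X) (φ : X → ℝ) : Set ℝ :=
  {r | ∃ J, T.Mem J ∧ J ⊆ K ∧
    r = Real.sqrt (avgOn μ J (fun x => (φ x) ^ 2) - (avgOn μ J φ) ^ 2)}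

/-- `‖φ‖_{BMO(𝒯)}`. -/
def bmoNorm (T : AlphaTree μ α) (φ : X → ℝ) : ℝ := sSup (T.bmoSet φ)

/-- `‖φ‖_{BMO(𝒯(K))}`. -/
def bmoNormOn (T : AlphaTree μ α) (K : Set X) (φ : X → ℝ) : ℝ :=
  sSup (T.bmoSetOn K φ)

/-- `φ ∈ BMO(𝒯)`. -/
def MemBMO (T : AlphaTree μ α) (φ : X → ℝ) : Prop :=
  Integrable φ μ ∧ Integrable (fun x => (φ x) ^ 2) μ ∧ BddAbove (T.bmoSet φ)

/-- `φ|_K ∈ BMO(𝒯(K))`. -/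
def MemBMOOn (T : AlphaTree μ α) (K : Set X) (φ : X → ℝ) : Prop :=
  IntegrableOn φ K μ ∧ IntegrableOn (fun x => (φ x) ^ 2) K μ ∧
    BddAbove (T.bmoSetOn K φ)

/-- The set of quantities `⟨φ⟩_J − ess inf_J φ`, `J ∈ 𝒯`, whose supremum is
the BLO(𝒯) norm. -/
def bloSet (T : AlphaTree μ α) (φ : X → ℝ) : Set ℝ :=
  {r | ∃ J, T.Mem J ∧ r = avgOn μ J φ - essInf φ (μ.restrict J)}

/-- `‖φ‖_{BLO(𝒯)}`. -/
def bloNorm (T : AlphaTree μ α) (φ : X → ℝ) : ℝ := sSup (T.bloSet φ)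

/-- `φ ∈ BLO(𝒯)`. -/
def MemBLO (T : AlphaTree μ α) (φ : X → ℝ) : Prop :=
  Integrable φ μ ∧ BddAbove (T.bloSet φ)

/-- The set of averages `⟨φ⟩_{J,μ}` over tree elements `J` containing `x`. -/
def maxSet (T : AlphaTree μ α) (φ : X → ℝ) (x : X) : Set ℝ :=
  {r | ∃ J, T.Mem J ∧ x ∈ J ∧ r = avgOn μ J φ}

/-- The natural maximal operator `N_𝒯 φ`. -/
def natMax (T : AlphaTree μ α) (φ : X → ℝ) (x : X) : ℝ := sSup (T.maxSet φ x)

/-- The classical maximal operator `M_𝒯 φ`. -/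
def clMax (T : AlphaTree μ α) (φ : X → ℝ) (x : X) : ℝ :=
  sSup (T.maxSet (fun y => |φ y|) x)

end AlphaTree

namespace AlphaTree

variable {X : Type*} [MeasurableSpace X] {μ : Measure X} {α : ℝ}

lemma subset_of_mem_children (T : AlphaTree μ α) {m : ℕ} {P J : Set X}
    (hP : P ∈ T.gen m) (hJ : J ∈ T.children P) : J ⊆ P := by
  conv_rhs => rw [← T.sUnion_children m P hP]
  exact subset_sUnion_of_mem hJ

lemma exists_parent (T : AlphaTree μ α) {m : ℕ} {J : Set X} (hJ : J ∈ T.gen (m + 1)) :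
    ∃ P ∈ T.gen m, J ∈ T.children P ∧ J ⊆ P := by
  rw [T.gen_succ m] at hJ
  simp only [Set.mem_iUnion] at hJ
  obtain ⟨P, hP, hJP⟩ := hJ
  exact ⟨P, hP, hJP, T.subset_of_mem_children hP hJP⟩

lemma exists_ancestor (T : AlphaTree μ α) {m k : ℕ} (hk : k ≤ m) {J : Set X}
    (hJ : J ∈ T.gen m) : ∃ R ∈ T.gen k, J ⊆ R := by
  induction m generalizing J with
  | zero => exact ⟨J, by simpa [Nat.le_zero.mp hk] using hJ, subset_rfl⟩
  | succ m ih =>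
    rcases Nat.eq_or_lt_of_le hk with rfl | hlt
    · exact ⟨J, hJ, subset_rfl⟩
    · obtain ⟨P, hP, _, hJP⟩ := T.exists_parent hJ
      obtain ⟨R, hR, hPR⟩ := ih (Nat.lt_succ_iff.mp hlt) hP
      exact ⟨R, hR, hJP.trans hPR⟩

lemma le_measure_gen (T : AlphaTree μ α) (m : ℕ) {J : Set X} (hJ : J ∈ T.gen m) :
    ENNReal.ofReal α ^ m * μ Set.univ ≤ μ J := by
  induction m generalizing J with
  | zero =>
    rw [T.gen_zero] at hJ
    simp [Set.mem_singleton_iff.mp hJ]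
  | succ m ih =>
    obtain ⟨P, hP, hJP, _⟩ := T.exists_parent hJ
    calc ENNReal.ofReal α ^ (m + 1) * μ Set.univ
        = ENNReal.ofReal α * (ENNReal.ofReal α ^ m * μ Set.univ) := by ring
      _ ≤ ENNReal.ofReal α * μ P := by
          exact mul_le_mul_right (ih hP) _
      _ ≤ μ J := T.measure_child m P hP J hJP

lemma gen_pos (T : AlphaTree μ α) (hα0 : 0 < α) (hμ0 : 0 < μ Set.univ)
    (m : ℕ) {J : Set X} (hJ : J ∈ T.gen m) : 0 < μ J := by
  refine lt_of_lt_of_le ?_ (T.le_measure_gen m hJ)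
  exact ENNReal.mul_pos (pow_ne_zero _ (by simpa using hα0)) hμ0.ne'

lemma gen_pairwise (T : AlphaTree μ α) (m : ℕ) :
    (T.gen m).Pairwise (MeasureTheory.AEDisjoint μ) := by
  induction m with
  | zero =>
    rw [T.gen_zero]
    exact Set.pairwise_singleton _ _
  | succ m ih =>
    intro J hJ J' hJ' hne
    obtain ⟨P, hP, hJP, hJsub⟩ := T.exists_parent hJ
    obtain ⟨P', hP', hJP', hJsub'⟩ := T.exists_parent hJ'
    by_cases hPP : P = P'
    · subst hPP
      exact T.ae_disjoint m P hP hJP hJP' hne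
    · exact measure_mono_null (Set.inter_subset_inter hJsub hJsub') (ih hP hP' hPP)

lemma gen_finite (T : AlphaTree μ α) (hα0 : 0 < α) (hμ0 : 0 < μ Set.univ)
    (hμfin : μ Set.univ < ⊤) (m : ℕ) : (T.gen m).Finite := by
  by_contra hinf
  have hε : (ENNReal.ofReal α ^ m * μ Set.univ) ≠ 0 :=
    (ENNReal.mul_pos (pow_ne_zero _ (by simpa using hα0)) hμ0.ne').ne'
  obtain ⟨N, hN⟩ := ENNReal.exists_nat_mul_gt hε hμfin.ne
  have hinf' : (T.gen m).Infinite := hinf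
  obtain ⟨F, hFsub, hFcard⟩ := hinf'.exists_subset_card_eq N
  have hdisj : (↑F : Set (Set X)).Pairwise (Function.onFun (MeasureTheory.AEDisjoint μ) id) := by
    intro J hJ J' hJ' hne
    exact T.gen_pairwise m (hFsub hJ) (hFsub hJ') hne
  have hmeas : ∀ J ∈ F, NullMeasurableSet (id J) μ := fun J hJ =>
    (T.measurableSet m J (hFsub hJ)).nullMeasurableSet
  have heq : μ (⋃ J ∈ F, id J) = ∑ J ∈ F, μ (id J) := measure_biUnion_finset₀ hdisj hmeas
  have hge : (N : ENNReal) * (ENNReal.ofReal α ^ m * μ Set.univ) ≤ ∑ J ∈ F, μ (id J) := by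
    calc (N : ENNReal) * (ENNReal.ofReal α ^ m * μ Set.univ)
        = ∑ _J ∈ F, (ENNReal.ofReal α ^ m * μ Set.univ) := by
          rw [Finset.sum_const, hFcard, nsmul_eq_mul]
      _ ≤ ∑ J ∈ F, μ (id J) := Finset.sum_le_sum fun J hJ => T.le_measure_gen m (hFsub hJ)
  have hle : μ (⋃ J ∈ F, id J) ≤ μ Set.univ := measure_mono (Set.subset_univ _)
  rw [heq] at hle
  exact absurd (hN.trans_le (hge.trans hle)) (lt_irrefl _)

lemma exists_mem_gen (T : AlphaTree μ α) (m : ℕ) (x : X) : ∃ J ∈ T.gen m, x ∈ J := by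
  induction m with
  | zero => exact ⟨Set.univ, by rw [T.gen_zero]; exact Set.mem_singleton _, Set.mem_univ x⟩
  | succ m ih =>
    obtain ⟨J, hJ, hx⟩ := ih
    have hx' : x ∈ ⋃₀ T.children J := by rw [T.sUnion_children m J hJ]; exact hx
    obtain ⟨I, hIc, hxI⟩ := hx'
    refine ⟨I, ?_, hxI⟩
    rw [T.gen_succ m]
    exact Set.mem_iUnion₂.mpr ⟨J, hJ, hIc⟩

lemma ae_good (T : AlphaTree μ α) (hα0 : 0 < α) (hμ0 : 0 < μ Set.univ)
    (hμfin : μ Set.univ < ⊤) :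
    ∀ᵐ x ∂μ, ∀ m : ℕ, ∀ J ∈ T.gen m, ∀ J' ∈ T.gen m, x ∈ J → x ∈ J' → J = J' := by
  rw [ae_all_iff]
  intro m
  have hc : (T.gen m).Countable := (T.gen_finite hα0 hμ0 hμfin m).countable
  rw [ae_ball_iff hc]
  intro J hJ
  rw [ae_ball_iff hc]
  intro J' hJ'
  by_cases hne : J = J'
  · exact Filter.Eventually.of_forall fun x _ _ => hne
  · have h0 : μ (J ∩ J') = 0 := T.gen_pairwise m hJ hJ' hne
    filter_upwards [measure_eq_zero_iff_ae_notMem.mp h0] with x hx hxJ hxJ'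
    exact absurd ⟨hxJ, hxJ'⟩ hx

end AlphaTree


/-- For an `α`-tree `𝒯` on `(X,μ)` with `0 < μ(X) < ∞`,
`φ ∈ L¹(X,μ)` and `I ∈ 𝒯`, the supremum of the averages of `φ` over tree elements
containing `I` equals the essential infimum of `N_𝒯 φ` over `I`. -/
theorem statement6 {X : Type*} [MeasurableSpace X] (μ : Measure X)
    (hμ0 : 0 < μ Set.univ) (hμfin : μ Set.univ < ⊤)
    (α : ℝ) (hα : α ∈ Set.Ioc (0 : ℝ) (1 / 2))
    (T : AlphaTree μ α) (φ : X → ℝ) (hφ : Integrable φ μ)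
    (I : Set X) (hI : T.Mem I) :
    sSup {r | ∃ R, T.Mem R ∧ I ⊆ R ∧ r = avgOn μ R φ} =
      essInf (T.natMax φ) (μ.restrict I) := by
  obtain ⟨hα0, hα2⟩ := hα
  obtain ⟨n, hIn⟩ := hI
  classical
  -- basic facts
  have hpos : ∀ m, ∀ J ∈ T.gen m, (0 : ENNReal) < μ J := fun m J hJ => T.gen_pos hα0 hμ0 m hJ
  have hfinm : ∀ J : Set X, μ J < ⊤ := fun J => (measure_mono (Set.subset_univ J)).trans_lt hμfin
  have hImeas : MeasurableSet I := T.measurableSet n I hIn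
  have hIpos : 0 < μ I := hpos n I hIn
  -- the ancestor chain of I
  have hanc : ∀ k, k ≤ n → ∃ R ∈ T.gen k, I ⊆ R := fun k hk => T.exists_ancestor hk hIn
  choose! A hAgen hAsub using hanc
  have huniq : ∀ k, k ≤ n → ∀ R, R ∈ T.gen k → I ⊆ R → R = A k := by
    intro k hk R hR hIR
    by_contra hne
    exact absurd (measure_mono_null (Set.subset_inter hIR (hAsub k hk))
      (T.gen_pairwise k hR (hAgen k hk) hne)) hIpos.ne'
  set S := {r | ∃ R, T.Mem R ∧ I ⊆ R ∧ r = avgOn μ R φ} with hSdef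
  have hSne : S.Nonempty := ⟨avgOn μ I φ, I, ⟨n, hIn⟩, subset_rfl, rfl⟩
  have hSsub : S ⊆ (fun k => avgOn μ (A k) φ) '' Set.Iic n := by
    rintro r ⟨R, ⟨m, hRm⟩, hIR, rfl⟩
    rcases le_or_gt m n with hmn | hnm
    · exact ⟨m, Set.mem_Iic.mpr hmn, by show avgOn μ (A m) φ = avgOn μ R φ; rw [huniq m hmn R hRm hIR]⟩
    · obtain ⟨B, hB, hRB⟩ := T.exists_ancestor hnm.le hRm
      have hBI : B = A n := huniq n le_rfl B hB (hIR.trans hRB)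
      have hAnI : A n = I := (huniq n le_rfl I hIn subset_rfl).symm
      have hRI : R = I := subset_antisymm (by rw [← hAnI, ← hBI]; exact hRB) hIR
      exact ⟨n, Set.mem_Iic.mpr le_rfl, by show avgOn μ (A n) φ = avgOn μ R φ; rw [hAnI, hRI]⟩
  have hSbdd : BddAbove S := (((Set.finite_Iic n).image _).subset hSsub).bddAbove
  -- membership of univ in the tree
  have hunivmem : T.Mem Set.univ := ⟨0, by rw [T.gen_zero]; exact Set.mem_singleton _⟩
  -- key a.e. property: bounded maximal set + uniqueness of generations
  have hKey : ∀ᵐ x ∂μ, BddAbove (T.maxSet φ x) ∧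
      (∀ m : ℕ, ∀ J ∈ T.gen m, ∀ J' ∈ T.gen m, x ∈ J → x ∈ J' → J = J') := by
    filter_upwards [T.ae_good hα0 hμ0 hμfin, T.differentiates φ hφ] with x hg hd
    refine ⟨?_, hg⟩
    choose C hC1 hC2 using fun k => T.exists_mem_gen k x
    have ht : Tendsto (fun k => avgOn μ (C k) φ) atTop (𝓝 (φ x)) :=
      hd C fun k => ⟨hC1 k, hC2 k⟩
    refine ht.bddAbove_range.mono ?_
    rintro r ⟨J, ⟨m, hJm⟩, hxJ, rfl⟩
    exact ⟨m, by show avgOn μ (C m) φ = avgOn μ J φ; rw [hg m (C m) (hC1 m) J hJm (hC2 m) hxJ]⟩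
  -- natMax is bounded below everywhere
  have hlb : ∀ x, min (avgOn μ Set.univ φ) 0 ≤ T.natMax φ x := by
    intro x
    by_cases hb : BddAbove (T.maxSet φ x)
    · exact (min_le_left _ _).trans
        (le_csSup hb ⟨Set.univ, hunivmem, Set.mem_univ x, rfl⟩)
    · rw [AlphaTree.natMax, Real.sSup_of_not_bddAbove hb]
      exact min_le_right _ _
  -- essInf as a csSup
  have hessInf : essInf (T.natMax φ) (μ.restrict I) =
      sSup {a | ∀ᵐ x ∂μ.restrict I, a ≤ T.natMax φ x} := Filter.liminf_eq
  have hresne : NeBot (ae (μ.restrict I)) :=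
    ae_neBot.2 fun h => hIpos.ne' (Measure.restrict_eq_zero.mp h)
  have hA'ne : {a | ∀ᵐ x ∂μ.restrict I, a ≤ T.natMax φ x}.Nonempty :=
    ⟨min (avgOn μ Set.univ φ) 0, by
      simp only [Set.mem_setOf_eq]; exact Filter.Eventually.of_forall hlb⟩
  have hA'bdd : BddAbove {a | ∀ᵐ x ∂μ.restrict I, a ≤ T.natMax φ x} := by
    by_contra hb
    have h1 : ∀ N : ℕ, ∀ᵐ x ∂μ.restrict I, (N : ℝ) ≤ T.natMax φ x := by
      intro N
      obtain ⟨a, ha, haN⟩ := not_bddAbove_iff.mp hb (N : ℝ)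
      have ha' : ∀ᵐ x ∂μ.restrict I, a ≤ T.natMax φ x := ha
      exact ha'.mono fun x hx => haN.le.trans hx
    obtain ⟨x, hx⟩ := (ae_all_iff.mpr h1).exists
    obtain ⟨N, hN⟩ := exists_nat_gt (T.natMax φ x)
    exact absurd (hx N) (not_le.mpr hN)
  -- direction 1 : sSup S ≤ essInf
  have hdir1 : sSup S ≤ essInf (T.natMax φ) (μ.restrict I) := by
    rw [hessInf]
    refine csSup_le hSne ?_
    rintro r ⟨R, hRmem, hIR, rfl⟩
    refine le_csSup hA'bdd ?_
    show ∀ᵐ x ∂μ.restrict I, avgOn μ R φ ≤ T.natMax φ x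
    filter_upwards [ae_restrict_of_ae hKey, ae_restrict_mem hImeas] with x hk hxI
    exact le_csSup hk.1 ⟨R, hRmem, hIR hxI, rfl⟩
  -- direction 2 : essInf ≤ sSup S
  have hdir2 : essInf (T.natMax φ) (μ.restrict I) ≤ sSup S := by
    rw [hessInf]
    by_contra hlt
    push_neg at hlt
    obtain ⟨c, hcA, hcL⟩ := exists_lt_of_lt_csSup hA'ne hlt
    have hcA' : ∀ᵐ x ∂μ.restrict I, c ≤ T.natMax φ x := hcA
    set t := (sSup S + c) / 2 with htdef
    have htL : sSup S < t := by rw [htdef]; linarith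
    have htc : t < c := by rw [htdef]; linarith
    -- the stopping family
    set M := {J : Set X | ∃ k, J ∈ T.gen k ∧ J ⊆ I ∧ t < avgOn μ J φ ∧
        ∀ j < k, ∀ R ∈ T.gen j, J ⊆ R → avgOn μ R φ ≤ t} with hMdef
    have hMc : M.Countable := by
      refine Set.Countable.mono (fun J hJ => ?_)
        (Set.countable_iUnion fun k => (T.gen_finite hα0 hμ0 hμfin k).countable)
      obtain ⟨k, hk, -⟩ := hJ
      exact Set.mem_iUnion.mpr ⟨k, hk⟩
    have hMmeas : ∀ J ∈ M, MeasurableSet J := by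
      rintro J ⟨k, hk, -⟩
      exact T.measurableSet k J hk
    have hMsub : ∀ J ∈ M, J ⊆ I := by rintro J ⟨k, hk, hJI, -⟩; exact hJI
    have hint : ∀ J ∈ M, t * (μ J).toReal ≤ ∫ x in J, φ x ∂μ := by
      rintro J ⟨k, hJk, hJI, htJ, -⟩
      have h0 : 0 < (μ J).toReal := ENNReal.toReal_pos (hpos k J hJk).ne' (hfinm J).ne
      have h1 : t ≤ (μ J).toReal⁻¹ * ∫ x in J, φ x ∂μ := by
        have := htJ.le
        rwa [avgOn, setAverage_eq, smul_eq_mul] at this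
      calc t * (μ J).toReal ≤ ((μ J).toReal⁻¹ * ∫ x in J, φ x ∂μ) * (μ J).toReal :=
            mul_le_mul_of_nonneg_right h1 h0.le
        _ = ∫ x in J, φ x ∂μ := by field_simp
    -- pairwise a.e. disjointness of M
    have haux : ∀ (J : Set X) (k : ℕ) (J' : Set X) (k' : ℕ), J ∈ T.gen k →
        t < avgOn μ J φ → J' ∈ T.gen k' →
        (∀ j < k', ∀ R ∈ T.gen j, J' ⊆ R → avgOn μ R φ ≤ t) →
        k < k' → μ (J ∩ J') = 0 := by
      intro J k J' k' hJk htJ hJk' hpt' hkk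
      obtain ⟨R, hR, hJ'R⟩ := T.exists_ancestor hkk.le hJk'
      by_cases hRJ : R = J
      · subst hRJ
        exact absurd (hpt' k hkk R hR hJ'R) (not_le.mpr htJ)
      · exact measure_mono_null (Set.inter_subset_inter_right J hJ'R)
          (T.gen_pairwise k hJk hR fun h => hRJ h.symm)
    have hMdisj : M.Pairwise (MeasureTheory.AEDisjoint μ) := by
      rintro J ⟨k, hJk, -, htJ, hpt⟩ J' ⟨k', hJk', -, htJ', hpt'⟩ hne
      rcases lt_trichotomy k k' with h | h | h
      · exact haux J k J' k' hJk htJ hJk' hpt' h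
      · subst h; exact T.gen_pairwise k hJk hJk' hne
      · have := haux J' k' J k hJk' htJ' hJk hpt h
        rwa [Set.inter_comm] at this
    -- a.e. coverage of I by M
    have hcov : ∀ᵐ x ∂μ.restrict I, x ∈ ⋃₀ M := by
      filter_upwards [ae_restrict_of_ae hKey, ae_restrict_mem hImeas, hcA'] with x hk hxI hcx
      obtain ⟨hbdd, hg⟩ := hk
      have hmsne : (T.maxSet φ x).Nonempty :=
        ⟨avgOn μ Set.univ φ, Set.univ, hunivmem, Set.mem_univ x, rfl⟩
      have hlt' : t < sSup (T.maxSet φ x) := htc.trans_le hcx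
      obtain ⟨r, hr, hrt⟩ := exists_lt_of_lt_csSup hmsne hlt'
      obtain ⟨J, ⟨m, hJm⟩, hxJ, rfl⟩ := hr
      have hex : ∃ k, ∃ J, J ∈ T.gen k ∧ x ∈ J ∧ t < avgOn μ J φ := ⟨m, J, hJm, hxJ, hrt⟩
      set k₀ := Nat.find hex with hk₀def
      obtain ⟨J₀, hJ₀gen, hxJ₀, htJ₀⟩ := Nat.find_spec hex
      have hk₀n : n < k₀ := by
        by_contra hle
        push_neg at hle
        have hJA : J₀ = A k₀ := hg k₀ J₀ hJ₀gen (A k₀) (hAgen k₀ hle) hxJ₀ (hAsub k₀ hle hxI)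
        have hmem : avgOn μ (A k₀) φ ∈ S := ⟨A k₀, ⟨k₀, hAgen k₀ hle⟩, hAsub k₀ hle, rfl⟩
        have hle2 : avgOn μ (A k₀) φ ≤ sSup S := le_csSup hSbdd hmem
        rw [← hJA] at hle2
        exact absurd (htJ₀.trans_le hle2) (not_lt.mpr htL.le)
      have hJ₀I : J₀ ⊆ I := by
        obtain ⟨R, hRn, hJ₀R⟩ := T.exists_ancestor hk₀n.le hJ₀gen
        have hRI : R = I := hg n R hRn I hIn (hJ₀R hxJ₀) hxI
        exact hRI ▸ hJ₀R
      refine ⟨J₀, ⟨k₀, hJ₀gen, hJ₀I, htJ₀, ?_⟩, hxJ₀⟩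
      intro j hj R hR hJR
      by_contra hc'
      push_neg at hc'
      exact Nat.find_min hex hj ⟨R, hR, hJR hxJ₀, hc'⟩
    -- measure-theoretic consequences
    have hUmeas : MeasurableSet (⋃₀ M) := MeasurableSet.sUnion hMc hMmeas
    have hUI : ⋃₀ M ⊆ I := Set.sUnion_subset hMsub
    have haeEq : I =ᵐ[μ] ⋃₀ M := by
      rw [MeasureTheory.ae_eq_set]
      constructor
      · have h1 := ae_iff.mp hcov
        rw [← Set.compl_def, Measure.restrict_apply hUmeas.compl] at h1
        rw [Set.diff_eq, Set.inter_comm]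
        exact h1
      · rw [Set.diff_eq_empty.mpr hUI]; exact measure_empty
    haveI := hMc.to_subtype
    have hsUeq : ⋃₀ M = ⋃ (J : M), (J : Set X) := Set.sUnion_eq_iUnion
    have hpw : Pairwise (Function.onFun (MeasureTheory.AEDisjoint μ) fun J : M => (J : Set X)) :=
      fun J J' hne => hMdisj J.2 J'.2 (Subtype.coe_ne_coe.mpr hne)
    have hHS1 : HasSum (fun J : M => ∫ x in (J : Set X), φ x ∂μ) (∫ x in ⋃₀ M, φ x ∂μ) := by
      rw [hsUeq]
      exact hasSum_integral_iUnion_ae (fun J => (hMmeas J J.2).nullMeasurableSet) hpw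
        hφ.integrableOn
    have hmeq : μ (⋃₀ M) = ∑' J : M, μ (J : Set X) := by
      rw [hsUeq]
      exact measure_iUnion₀ hpw fun J => (hMmeas J J.2).nullMeasurableSet
    have hsumfin : ∑' J : M, μ (J : Set X) ≠ ⊤ := by
      rw [← hmeq]; exact (hfinm _).ne
    have hHS2 : HasSum (fun J : M => (μ (J : Set X)).toReal) (μ (⋃₀ M)).toReal := by
      rw [hmeq, ENNReal.tsum_toReal_eq fun J => (hfinm _).ne]
      exact ENNReal.hasSum_toReal hsumfin
    have hle1 : t * (μ (⋃₀ M)).toReal ≤ ∫ x in ⋃₀ M, φ x ∂μ :=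
      hasSum_le (fun J : ↑M => hint (J : Set X) J.2) (hHS2.mul_left t) hHS1
    have hinteq : ∫ x in ⋃₀ M, φ x ∂μ = ∫ x in I, φ x ∂μ := by
      rw [Measure.restrict_congr_set haeEq.symm]
    have hmeaseq : μ (⋃₀ M) = μ I := (measure_congr haeEq).symm
    have h0I : 0 < (μ I).toReal := ENNReal.toReal_pos hIpos.ne' (hfinm I).ne
    have havgI : avgOn μ I φ ≤ sSup S := le_csSup hSbdd ⟨I, ⟨n, hIn⟩, subset_rfl, rfl⟩
    have hIint : ∫ x in I, φ x ∂μ = avgOn μ I φ * (μ I).toReal := by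
      rw [avgOn, setAverage_eq, smul_eq_mul, measureReal_def]
      field_simp
    have : t * (μ I).toReal ≤ sSup S * (μ I).toReal := by
      calc t * (μ I).toReal = t * (μ (⋃₀ M)).toReal := by rw [hmeaseq]
        _ ≤ ∫ x in ⋃₀ M, φ x ∂μ := hle1
        _ = avgOn μ I φ * (μ I).toReal := by rw [hinteq, hIint]
        _ ≤ sSup S * (μ I).toReal := mul_le_mul_of_nonneg_right havgI h0I.le
    have : t ≤ sSup S := le_of_mul_le_mul_right this h0I
    exact absurd this (not_le.mpr htL)
  exact le_antisymm hdir1 hdir2
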